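/- Let n be a positive integer, let D ∈ ℝ^{n×n} have nonnegative entries with zero diagonal, let Q₁, Q₂ ∈ ℝ^n be probability vectors, and let ε₁, ε₂ ≥ 0. For k = 1, 2 define the discrete Wasserstein ambiguity set B_k as the set of probability vectors p ∈ ℝ^n for which there exists Γ ∈ ℝ^{n×n} with nonnegative entries such that Σ_m Γ_{ℓm} = (Q_k)_ℓ for all ℓ, Σ_ℓ Γ_{ℓm} = p_m for all m, and Σ_{ℓ,m} Γ_{ℓm} D_{ℓm} ≤ ε_k. Then the infimum of TV(p₁, p₂) := (1/2) Σ_ℓ |p₁,ℓ − p₂,ℓ| over (p₁, p₂) ∈ B₁ × B₂ equals 1 − V*, where V* is the optimal value of the linear program maximizing Σ_ℓ t_ℓ over (p₁, p₂, Γ₁, Γ₂, t) subject to: p₁, p₂ probability vectors, Γ₁, Γ₂ ≥ 0 entrywise, Σ_{ℓ,m} Γ_{k,ℓm} D_{ℓm} ≤ ε_k, Σ_m Γ_{k,ℓm} = (Q_k)_ℓ, Σ_ℓ Γ_{k,ℓm} = p_{k,m} (k = 1,2), and 0 ≤ t_ℓ ≤ p_{1,ℓ}, 0 ≤ t_ℓ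 ≤ p_{2,ℓ}. -/
import Mathlib


open Finset

/-- A tuple `(p₁, p₂, Γ₁, Γ₂, t)` of decision variables of the
worst-case-distribution LP. -/
abbrev LPTuple (n : ℕ) : Type :=
  (Fin n → ℝ) × (Fin n → ℝ) × (Fin n → Fin n → ℝ) × (Fin n → Fin n → ℝ) × (Fin n → ℝ)

/-- The feasibility predicate of the worst-case-distribution LP
(with `0 ≤ tℓ ≤ p₁ℓ` and `0 ≤ tℓ ≤ p₂ℓ`). -/
def LPFeasible (n : ℕ) (D : Fin n → Fin n → ℝ) (Q₁ Q₂ : Fin n → ℝ)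
    (ε₁ ε₂ : ℝ) (x : LPTuple n) : Prop :=
  (∀ ℓ, 0 ≤ x.1 ℓ) ∧ (∑ ℓ, x.1 ℓ = 1) ∧
  (∀ ℓ, 0 ≤ x.2.1 ℓ) ∧ (∑ ℓ, x.2.1 ℓ = 1) ∧
  (∀ ℓ m, 0 ≤ x.2.2.1 ℓ m) ∧ (∀ ℓ m, 0 ≤ x.2.2.2.1 ℓ m) ∧
  (∑ ℓ, ∑ m, x.2.2.1 ℓ m * D ℓ m ≤ ε₁) ∧
  (∑ ℓ, ∑ m, x.2.2.2.1 ℓ m * D ℓ m ≤ ε₂) ∧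
  (∀ ℓ, ∑ m, x.2.2.1 ℓ m = Q₁ ℓ) ∧ (∀ m, ∑ ℓ, x.2.2.1 ℓ m = x.1 m) ∧
  (∀ ℓ, ∑ m, x.2.2.2.1 ℓ m = Q₂ ℓ) ∧ (∀ m, ∑ ℓ, x.2.2.2.1 ℓ m = x.2.1 m) ∧
  (∀ ℓ, 0 ≤ x.2.2.2.2 ℓ ∧ x.2.2.2.2 ℓ ≤ x.1 ℓ ∧ x.2.2.2.2 ℓ ≤ x.2.1 ℓ)

/-- The discrete 1-Wasserstein ambiguity set of radius `ε` around the
probability vector `Q`, relative to the cost matrix `D`. -/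
def AmbiguitySet (n : ℕ) (D : Fin n → Fin n → ℝ) (Q : Fin n → ℝ) (ε : ℝ) :
    Set (Fin n → ℝ) :=
  {p | (∀ m, 0 ≤ p m) ∧ (∑ m, p m = 1) ∧
    ∃ Γ : Fin n → Fin n → ℝ,
      (∀ ℓ m, 0 ≤ Γ ℓ m) ∧
      (∀ ℓ, ∑ m, Γ ℓ m = Q ℓ) ∧
      (∀ m, ∑ ℓ, Γ ℓ m = p m) ∧
      (∑ ℓ, ∑ m, Γ ℓ m * D ℓ m ≤ ε)}

/-- The minimal total-variation distance between the two Wasserstein ambiguity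
sets equals `1 - V⋆`, where `V⋆` is the optimal value of the finite LP. -/
theorem stmt_5 (n : ℕ) (hn : 0 < n) (D : Fin n → Fin n → ℝ)
    (hD : ∀ ℓ m, 0 ≤ D ℓ m) (hDdiag : ∀ ℓ, D ℓ ℓ = 0)
    (Q₁ Q₂ : Fin n → ℝ)
    (hQ₁ : ∀ ℓ, 0 ≤ Q₁ ℓ) (hQ₁1 : ∑ ℓ, Q₁ ℓ = 1)
    (hQ₂ : ∀ ℓ, 0 ≤ Q₂ ℓ) (hQ₂1 : ∑ ℓ, Q₂ ℓ = 1)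
    (ε₁ ε₂ : ℝ) (hε₁ : 0 ≤ ε₁) (hε₂ : 0 ≤ ε₂) :
    sInf {r : ℝ | ∃ p₁ ∈ AmbiguitySet n D Q₁ ε₁, ∃ p₂ ∈ AmbiguitySet n D Q₂ ε₂,
        r = (1 / 2) * ∑ ℓ, |p₁ ℓ - p₂ ℓ|}
      = 1 - sSup {v : ℝ | ∃ x : LPTuple n,
          LPFeasible n D Q₁ Q₂ ε₁ ε₂ x ∧ v = ∑ ℓ, x.2.2.2.2 ℓ} := by
  set S := {r : ℝ | ∃ p₁ ∈ AmbiguitySet n D Q₁ ε₁, ∃ p₂ ∈ AmbiguitySet n D Q₂ ε₂,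
    r = (1 / 2) * ∑ ℓ, |p₁ ℓ - p₂ ℓ|} with hS
  set T := {v : ℝ | ∃ x : LPTuple n,
    LPFeasible n D Q₁ Q₂ ε₁ ε₂ x ∧ v = ∑ ℓ, x.2.2.2.2 ℓ} with hT
  -- the center Q belongs to its ambiguity set
  have hcenter : ∀ (Q : Fin n → ℝ) (ε : ℝ), (∀ ℓ, 0 ≤ Q ℓ) → (∑ ℓ, Q ℓ = 1) → 0 ≤ ε →
      Q ∈ AmbiguitySet n D Q ε := by
    intro Q ε hQ hQ1 hε
    refine ⟨hQ, hQ1, fun ℓ m => if ℓ = m then Q ℓ else 0, ?_, ?_, ?_, ?_⟩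
    · intro ℓ m; dsimp only; split <;> simp [hQ _]
    · intro ℓ; simp
    · intro m; simp
    · calc ∑ ℓ, ∑ m, (if ℓ = m then Q ℓ else 0) * D ℓ m
          = ∑ ℓ : Fin n, Q ℓ * D ℓ ℓ := by
            refine Finset.sum_congr rfl fun ℓ _ => ?_
            rw [Finset.sum_eq_single ℓ]
            · simp
            · intro m _ hm; simp [Ne.symm hm]
            · simp
        _ = 0 := by simp [hDdiag]
        _ ≤ ε := hε
  -- key: sum of min equals 1 - TV
  have hminsum : ∀ p₁ p₂ : Fin n → ℝ, (∑ ℓ, p₁ ℓ = 1) → (∑ ℓ, p₂ ℓ = 1) →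
      ∑ ℓ, min (p₁ ℓ) (p₂ ℓ) = 1 - (1 / 2) * ∑ ℓ, |p₁ ℓ - p₂ ℓ| := by
    intro p₁ p₂ h1 h2
    have hmin : ∀ ℓ, min (p₁ ℓ) (p₂ ℓ) = (p₁ ℓ + p₂ ℓ - |p₁ ℓ - p₂ ℓ|) / 2 := by
      intro ℓ
      rcases le_total (p₁ ℓ) (p₂ ℓ) with h | h
      · rw [min_eq_left h, abs_of_nonpos (by linarith)]; ring
      · rw [min_eq_right h, abs_of_nonneg (by linarith)]; ring
    rw [Finset.sum_congr rfl fun ℓ _ => hmin ℓ, ← Finset.sum_div]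
    rw [Finset.sum_sub_distrib, Finset.sum_add_distrib, h1, h2]
    ring
  -- every element of S gives 1 - r ∈ T
  have h1 : ∀ r ∈ S, (1 - r) ∈ T := by
    rintro r ⟨p₁, ⟨hp₁0, hp₁1, Γ₁, hΓ₁0, hΓ₁r, hΓ₁c, hΓ₁ε⟩,
      p₂, ⟨hp₂0, hp₂1, Γ₂, hΓ₂0, hΓ₂r, hΓ₂c, hΓ₂ε⟩, rfl⟩
    refine ⟨(p₁, p₂, Γ₁, Γ₂, fun ℓ => min (p₁ ℓ) (p₂ ℓ)),
      ⟨hp₁0, hp₁1, hp₂0, hp₂1, hΓ₁0, hΓ₂0, hΓ₁ε, hΓ₂ε, hΓ₁r, hΓ₁c, hΓ₂r, hΓ₂c,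
        fun ℓ => ⟨le_min (hp₁0 ℓ) (hp₂0 ℓ), min_le_left _ _, min_le_right _ _⟩⟩, ?_⟩
    exact (hminsum p₁ p₂ hp₁1 hp₂1).symm
  -- every element of T is dominated
  have h2 : ∀ v ∈ T, ∃ r ∈ S, r ≤ 1 - v := by
    rintro v ⟨⟨p₁, p₂, Γ₁, Γ₂, t⟩,
      ⟨hp₁0, hp₁1, hp₂0, hp₂1, hΓ₁0, hΓ₂0, hΓ₁ε, hΓ₂ε, hΓ₁r, hΓ₁c, hΓ₂r, hΓ₂c, ht⟩, rfl⟩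
    refine ⟨(1 / 2) * ∑ ℓ, |p₁ ℓ - p₂ ℓ|,
      ⟨p₁, ⟨hp₁0, hp₁1, Γ₁, hΓ₁0, hΓ₁r, hΓ₁c, hΓ₁ε⟩,
       p₂, ⟨hp₂0, hp₂1, Γ₂, hΓ₂0, hΓ₂r, hΓ₂c, hΓ₂ε⟩, rfl⟩, ?_⟩
    have hle : ∑ ℓ, t ℓ ≤ ∑ ℓ, min (p₁ ℓ) (p₂ ℓ) :=
      Finset.sum_le_sum fun ℓ _ => le_min (ht ℓ).2.1 (ht ℓ).2.2
    have := hminsum p₁ p₂ hp₁1 hp₂1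
    dsimp only
    linarith
  -- nonemptiness and boundedness
  have hSne : S.Nonempty := by
    exact ⟨(1 / 2) * ∑ ℓ, |Q₁ ℓ - Q₂ ℓ|, Q₁, hcenter Q₁ ε₁ hQ₁ hQ₁1 hε₁,
      Q₂, hcenter Q₂ ε₂ hQ₂ hQ₂1 hε₂, rfl⟩
  obtain ⟨r₀, hr₀⟩ := hSne
  have hTne : T.Nonempty := ⟨1 - r₀, h1 r₀ hr₀⟩
  have hSbd : BddBelow S := by
    refine ⟨0, ?_⟩
    rintro r ⟨p₁, _, p₂, _, rfl⟩
    positivity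
  have hTbd : BddAbove T := by
    refine ⟨1, ?_⟩
    rintro v ⟨x, hx, rfl⟩
    calc ∑ ℓ, x.2.2.2.2 ℓ ≤ ∑ ℓ, x.1 ℓ :=
          Finset.sum_le_sum fun ℓ _ => (hx.2.2.2.2.2.2.2.2.2.2.2.2 ℓ).2.1
      _ = 1 := hx.2.1
  have hge : 1 - sSup T ≤ sInf S := by
    refine le_csInf ⟨r₀, hr₀⟩ fun r hr => ?_
    have := le_csSup hTbd (h1 r hr)
    linarith
  have hle : sInf S ≤ 1 - sSup T := by
    have : sSup T ≤ 1 - sInf S := by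
      refine csSup_le hTne fun v hv => ?_
      obtain ⟨r, hrS, hrle⟩ := h2 v hv
      have := csInf_le hSbd hrS
      linarith
    linarith
  linarith
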